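/- arXiv:2408.00165 — 2 statements merged into one kernel-verified Lean document; each statement's English description precedes it below -/
import Mathlib

section
/- (Over-smoothing lemma, averaged-walk form.) Let G be a finite simple graph on vertex set V, X : V → ℝ^D, and l ∈ ℕ. For each vertex v let W_v be a nonempty finite set of sequences s : Fin (l+1) → ℝ^D, each satisfying s(l) = X(v), together with weights p_v : W_v → ℝ≥0 with Σ_{s ∈ W_v} p_v(s) = 1. Let φ : (Fin (l+1) → ℝ^D) → ℝ^{D₁} be non-contractive with respect to the last element, meaning ‖φ(s) − φ(t)‖ ≥ ‖s(l) − t(l)‖ for all sequences s, t, and let f : ℝ^{D₁} → ℝ^{D₂} satisfy ‖f(x) − f(y)‖ ≥ ‖x − y‖ for all x, y. Define the node representation ψ(v) = f(φ(Σ_{s ∈ W_v} p_v(s) · s)) (φ applied to the weighted average sequence). Then 𝓔(ψ) ≥ 𝓔(X): the Dirichlet energy of the node representations is at least the Dirichlet energy of the initial features. -/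
/-- The Dirichlet energy of a vertex feature map `X : V → E` on a finite simple graph `G`:
`𝓔(X) = (1/|V|) · Σ_{(u,v) : u ~ v} ‖X u − X v‖²`, the sum ranging over all ordered pairs
of adjacent vertices. -/
noncomputable def dirichletEnergy {V : Type*} [Fintype V] (G : SimpleGraph V)
    [DecidableRel G.Adj] {E : Type*} [NormedAddCommGroup E] (X : V → E) : ℝ :=
  (Fintype.card V : ℝ)⁻¹ *
    ∑ u : V, ∑ v : V, if G.Adj u v then ‖X u - X v‖ ^ 2 else 0

/-- **Over-smoothing lemma, averaged-walk form.**  For each vertex `v`, let `W v` be a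
nonempty finite set of length-`(l+1)` feature sequences terminating at `X v`, with weights
`p v` summing to one.  If `φ` is non-contractive with respect to the last element of the
sequence and `f` is non-contractive, then the node representations
`ψ v = f (φ (Σ_{s ∈ W v} p v s • s))` have Dirichlet energy at least that of `X`. -/
theorem dirichletEnergy_le_of_rum
    {V : Type*} [Fintype V] (G : SimpleGraph V) [DecidableRel G.Adj]
    {D D₁ D₂ : ℕ} (X : V → EuclideanSpace ℝ (Fin D)) (l : ℕ)
    (W : V → Finset (Fin (l + 1) → EuclideanSpace ℝ (Fin D)))
    (hW : ∀ v, (W v).Nonempty)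
    (p : V → (Fin (l + 1) → EuclideanSpace ℝ (Fin D)) → ℝ)
    (hp0 : ∀ v, ∀ s ∈ W v, 0 ≤ p v s)
    (hp1 : ∀ v, ∑ s ∈ W v, p v s = 1)
    (hlast : ∀ v, ∀ s ∈ W v, s (Fin.last l) = X v)
    (φ : (Fin (l + 1) → EuclideanSpace ℝ (Fin D)) → EuclideanSpace ℝ (Fin D₁))
    (hφ : ∀ s t : Fin (l + 1) → EuclideanSpace ℝ (Fin D),
      ‖s (Fin.last l) - t (Fin.last l)‖ ≤ ‖φ s - φ t‖)
    (f : EuclideanSpace ℝ (Fin D₁) → EuclideanSpace ℝ (Fin D₂))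
    (hf : ∀ x y : EuclideanSpace ℝ (Fin D₁), ‖x - y‖ ≤ ‖f x - f y‖)
    (ψ : V → EuclideanSpace ℝ (Fin D₂))
    (hψ : ∀ v, ψ v = f (φ (∑ s ∈ W v, p v s • s))) :
    dirichletEnergy G X ≤ dirichletEnergy G ψ := by
  have key : ∀ v, (∑ s ∈ W v, p v s • s) (Fin.last l) = X v := by
    intro v
    have : (∑ s ∈ W v, p v s • s) (Fin.last l) = ∑ s ∈ W v, p v s • s (Fin.last l) := by
      simp [Finset.sum_apply]
    rw [this]
    calc ∑ s ∈ W v, p v s • s (Fin.last l) = ∑ s ∈ W v, p v s • X v := by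
          exact Finset.sum_congr rfl fun s hs => by rw [hlast v s hs]
      _ = (∑ s ∈ W v, p v s) • X v := by rw [Finset.sum_smul]
      _ = X v := by rw [hp1 v, one_smul]
  have hmain : ∀ u v, ‖X u - X v‖ ≤ ‖ψ u - ψ v‖ := by
    intro u v
    calc ‖X u - X v‖ = ‖(∑ s ∈ W u, p u s • s) (Fin.last l) -
            (∑ s ∈ W v, p v s • s) (Fin.last l)‖ := by rw [key u, key v]
      _ ≤ ‖φ (∑ s ∈ W u, p u s • s) - φ (∑ s ∈ W v, p v s • s)‖ := hφ _ _
      _ ≤ ‖f (φ (∑ s ∈ W u, p u s • s)) - f (φ (∑ s ∈ W v, p v s • s))‖ := hf _ _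
      _ = ‖ψ u - ψ v‖ := by rw [hψ u, hψ v]
  unfold dirichletEnergy
  gcongr with u _ v _
  split
  · exact pow_le_pow_left₀ (norm_nonneg _) (hmain u v) 2
  · exact le_rfl
end

section
/- (Theorem 1: RUM can distinguish non-isomorphic graphs, conditional on the Reconstruction Conjecture.) Assume the Reconstruction Conjecture: any two finite simple graphs with at least three vertices whose decks coincide (i.e. whose multisets of isomorphism classes of one-vertex-deleted subgraphs are equal) are isomorphic. Let L be a set of labels and let (G₁, ℓ₁) and (G₂, ℓ₂) be finite connected vertex-labeled simple graphs, each with at least two vertices, with labelings ℓ₁ : V(G₁) → L and ℓ₂ : V(G₂) → L. For a labeled graph (G, ℓ) and l ∈ ℕ, define the length-l walk distribution μ_G^l, which assigns to each pair (a, b) with a : {0,…,l} → L and b : {0,…,l} → ℕ the value Σ_w (1/|V(G)|)·Π_{i=0}^{l−1} deg(w_i)^{−1}, the sum over all walks w = (w_0, …, w_l) in G whose label sequence (ℓ(w_0), …, ℓ(w_l)) equals a and whose anonymous experiment ω(w) equals b. If μ_{G₁}^l = μ_{G₂}^l for every l ∈ ℕ, then there exists a graph isomorphism φ : G₁ → G₂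 that preserves labels, i.e. ℓ₂ ∘ φ = ℓ₁. -/
/-- The index of the first occurrence of `w i` in the finite sequence `w`:
`firstOcc w i = min { j : w j = w i }`. -/
def firstOcc {l : ℕ} {V : Type*} [DecidableEq V] (w : Fin (l + 1) → V)
    (i : Fin (l + 1)) : Fin (l + 1) :=
  (Finset.univ.filter fun j => w j = w i).min' ⟨i, by simp⟩

/-- The anonymous experiment of a finite sequence `w = (w 0, …, w l)`: the `i`-th entry is
the number of distinct elements among `w 0, …, w (j-1)`, where `j` is the smallest index
with `w j = w i`. -/
def anonExp {l : ℕ} {V : Type*} [DecidableEq V] (w : Fin (l + 1) → V) :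
    Fin (l + 1) → ℕ :=
  fun i => ((Finset.univ.filter fun k => k < firstOcc w i).image w).card

/-- The length-`l` walk distribution of a finite vertex-labeled simple graph `(G, ℓ)`:
to each label sequence `a` and anonymous experiment `b` it assigns
`Σ_w (1/|V|) · Π_{i<l} (deg (w i))⁻¹`, summed over all walks `w = (w 0, …, w l)` in `G`
whose label sequence equals `a` and whose anonymous experiment equals `b`. -/
noncomputable def walkDist {V : Type*} [Fintype V] [DecidableEq V] {L : Type*}
    [DecidableEq L] (G : SimpleGraph V) [DecidableRel G.Adj] (ℓ : V → L) (l : ℕ)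
    (a : Fin (l + 1) → L) (b : Fin (l + 1) → ℕ) : ℝ :=
  ∑ w : Fin (l + 1) → V,
    if (∀ i : Fin l, G.Adj (w i.castSucc) (w i.succ)) ∧
        (fun i => ℓ (w i)) = a ∧ anonExp w = b
    then (Fintype.card V : ℝ)⁻¹ * ∏ i : Fin l, ((G.degree (w i.castSucc) : ℝ))⁻¹
    else 0

/-! ### Auxiliary lemmas about the anonymous experiment -/

section Anon
variable {l : ℕ} {V : Type*} [DecidableEq V] (w : Fin (l + 1) → V)

lemma firstOcc_spec (i : Fin (l + 1)) : w (firstOcc w i) = w i := by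
  have := Finset.min'_mem (Finset.univ.filter fun j => w j = w i) ⟨i, by simp⟩
  exact (Finset.mem_filter.mp this).2

lemma firstOcc_min {i k : Fin (l + 1)} (h : k < firstOcc w i) : w k ≠ w i := by
  intro hk
  have : firstOcc w i ≤ k := Finset.min'_le _ _ (by simp [hk])
  exact absurd h (not_lt.mpr this)

lemma firstOcc_eq_of_eq {i j : Fin (l + 1)} (h : w i = w j) :
    firstOcc w i = firstOcc w j := by
  have hs : (Finset.univ.filter fun k => w k = w i)
      = (Finset.univ.filter fun k => w k = w j) := by
    ext k; simp [h]
  exact le_antisymm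
    (Finset.min'_le _ _ (by rw [hs]; exact Finset.min'_mem _ _))
    (Finset.min'_le _ _ (by rw [← hs]; exact Finset.min'_mem _ _))

lemma anon_lt {i j : Fin (l + 1)} (h : firstOcc w i < firstOcc w j) :
    anonExp w i < anonExp w j := by
  apply Finset.card_lt_card
  constructor
  · apply Finset.image_subset_image
    intro k hk
    simp only [Finset.mem_filter, Finset.mem_univ, true_and] at hk ⊢
    exact lt_trans hk h
  · intro hsub
    have hmem : w i ∈ (Finset.univ.filter fun k => k < firstOcc w j).image w :=
      Finset.mem_image.mpr ⟨firstOcc w i, by simp [h], firstOcc_spec w i⟩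
    have := hsub hmem
    rw [Finset.mem_image] at this
    obtain ⟨k, hk, hkw⟩ := this
    simp only [Finset.mem_filter, Finset.mem_univ, true_and] at hk
    exact firstOcc_min w hk hkw

/-- The anonymous experiment records exactly the coincidence pattern of the sequence. -/
lemma anonExp_eq_iff {i j : Fin (l + 1)} : anonExp w i = anonExp w j ↔ w i = w j := by
  constructor
  · intro h
    by_contra hne
    have hfo : firstOcc w i ≠ firstOcc w j := by
      intro he
      exact hne ((firstOcc_spec w i).symm.trans (he ▸ firstOcc_spec w j))
    rcases lt_or_gt_of_ne hfo with hl | hl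
    · exact absurd h (ne_of_lt (anon_lt w hl))
    · exact absurd h.symm (ne_of_lt (anon_lt w hl))
  · intro h
    unfold anonExp
    rw [firstOcc_eq_of_eq w h]

end Anon

/-! ### A walk covering prescribed adjacent pairs -/

section Cover
variable {V : Type*} (G : SimpleGraph V)

/-- A walk that traverses each ordered adjacent pair in the list `ps` consecutively. -/
noncomputable def coverWalk (hC : G.Preconnected) :
    (ps : List (V × V)) → (∀ p ∈ ps, G.Adj p.1 p.2) → (x : V) → Σ y : V, G.Walk x y
  | [], _, x => ⟨x, SimpleGraph.Walk.nil⟩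
  | p :: rest, h, x =>
    let w1 : G.Walk x p.1 := (hC x p.1).some
    let rest' := coverWalk hC rest (fun q hq => h q (List.mem_cons_of_mem _ hq)) p.2
    ⟨rest'.1, w1.append (SimpleGraph.Walk.cons (h p List.mem_cons_self) rest'.2)⟩

lemma coverWalk_darts (hC : G.Preconnected) :
    ∀ (ps : List (V × V)) (h : ∀ p ∈ ps, G.Adj p.1 p.2) (x : V) (p : V × V),
      p ∈ ps → ∃ d ∈ (coverWalk G hC ps h x).2.darts, d.toProd = p := by
  intro ps
  induction ps with
  | nil => simp
  | cons q rest ih =>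
    intro h x p hp
    simp only [coverWalk, SimpleGraph.Walk.darts_append, SimpleGraph.Walk.darts_cons,
      List.mem_append, List.mem_cons]
    rcases List.mem_cons.mp hp with rfl | hrest
    · exact ⟨⟨(p.1, p.2), h p List.mem_cons_self⟩, Or.inr (Or.inl rfl), rfl⟩
    · obtain ⟨d, hd, hdp⟩ := ih (fun q hq => h q (List.mem_cons_of_mem _ hq)) q.2 p hrest
      exact ⟨d, Or.inr (Or.inr hd), hdp⟩

lemma dart_getVert {u v : V} (p : G.Walk u v) :
    ∀ d ∈ p.darts, ∃ i < p.length,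
      p.getVert i = d.toProd.1 ∧ p.getVert (i + 1) = d.toProd.2 := by
  induction p with
  | nil => simp
  | @cons a b c hab q ih =>
    intro d hd
    rw [SimpleGraph.Walk.darts_cons, List.mem_cons] at hd
    rcases hd with rfl | hd
    · refine ⟨0, by simp [SimpleGraph.Walk.length_cons], by simp, ?_⟩
      rw [SimpleGraph.Walk.getVert_cons_succ]
      simp
    · obtain ⟨i, hi, h1, h2⟩ := ih d hd
      refine ⟨i + 1, by simp [SimpleGraph.Walk.length_cons]; omega, ?_, ?_⟩
      · rw [SimpleGraph.Walk.getVert_cons_succ]; exact h1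
      · rw [SimpleGraph.Walk.getVert_cons_succ]; exact h2

end Cover

/-! ### From equal walk distributions to an edge-preserving injection -/

lemma exists_embedding {V₁ V₂ L : Type} [Fintype V₁] [Fintype V₂] [DecidableEq V₁]
    [DecidableEq V₂] [DecidableEq L]
    (G₁ : SimpleGraph V₁) (G₂ : SimpleGraph V₂)
    [DecidableRel G₁.Adj] [DecidableRel G₂.Adj]
    (ℓ₁ : V₁ → L) (ℓ₂ : V₂ → L)
    (hconn₁ : G₁.Connected)
    (hcard₁ : 2 ≤ Fintype.card V₁)
    (hdist : ∀ (l : ℕ) (a : Fin (l + 1) → L) (b : Fin (l + 1) → ℕ),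
      walkDist G₁ ℓ₁ l a b = walkDist G₂ ℓ₂ l a b) :
    ∃ f : V₁ → V₂, Function.Injective f ∧ (∀ v, ℓ₂ (f v) = ℓ₁ v) ∧
      (∀ u v, G₁.Adj u v → G₂.Adj (f u) (f v)) := by
  classical
  have hnt : Nontrivial V₁ := Fintype.one_lt_card_iff_nontrivial.mp (by omega)
  have hne₁ : Nonempty V₁ := inferInstance
  set ps : List (V₁ × V₁) :=
    ((Finset.univ ×ˢ Finset.univ).filter fun p : V₁ × V₁ => G₁.Adj p.1 p.2).toList with hps_def
  have hps : ∀ p ∈ ps, G₁.Adj p.1 p.2 := by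
    intro p hp
    rw [hps_def, Finset.mem_toList, Finset.mem_filter] at hp
    exact hp.2
  have hps_mem : ∀ u v, G₁.Adj u v → (u, v) ∈ ps := by
    intro u v h
    rw [hps_def, Finset.mem_toList, Finset.mem_filter]
    exact ⟨by simp, h⟩
  obtain ⟨x₀⟩ := hne₁
  set P : Σ y : V₁, G₁.Walk x₀ y := coverWalk G₁ hconn₁.preconnected ps hps x₀ with hP
  set n : ℕ := P.2.length with hn
  set w : Fin (n + 1) → V₁ := fun i => P.2.getVert i with hw
  have hadj : ∀ i : Fin n, G₁.Adj (w i.castSucc) (w i.succ) := by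
    intro i
    have := P.2.adj_getVert_succ (i := (i : ℕ)) i.isLt
    simpa [hw, Fin.coe_castSucc, Fin.val_succ] using this
  have hedge : ∀ u v, G₁.Adj u v → ∃ i : Fin n, w i.castSucc = u ∧ w i.succ = v := by
    intro u v h
    obtain ⟨d, hd, hdp⟩ := coverWalk_darts G₁ hconn₁.preconnected ps hps x₀ (u, v)
      (hps_mem u v h)
    obtain ⟨i, hi, h1, h2⟩ := dart_getVert G₁ P.2 d hd
    refine ⟨⟨i, hi⟩, ?_, ?_⟩
    · simp only [hw, Fin.coe_castSucc]
      rw [h1, hdp]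
    · simp only [hw, Fin.val_succ]
      rw [h2, hdp]
  have hcover : ∀ v : V₁, ∃ i : Fin (n + 1), w i = v := by
    intro v
    obtain ⟨u, hu⟩ := exists_ne v
    have hreach := hconn₁.preconnected v u
    have hadjv : ∃ u', G₁.Adj v u' := by
      obtain ⟨q⟩ := hreach
      cases q with
      | nil => exact absurd rfl (Ne.symm hu)
      | cons h _ => exact ⟨_, h⟩
    obtain ⟨u', hu'⟩ := hadjv
    obtain ⟨i, h1, _⟩ := hedge v u' hu'
    exact ⟨i.castSucc, h1⟩
  set a : Fin (n + 1) → L := fun i => ℓ₁ (w i) with ha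
  set b : Fin (n + 1) → ℕ := anonExp w with hb
  have hpos : 0 < walkDist G₁ ℓ₁ n a b := by
    unfold walkDist
    apply Finset.sum_pos'
    · intro w' _
      split
      · positivity
      · exact le_refl 0
    · refine ⟨w, Finset.mem_univ w, ?_⟩
      rw [if_pos ⟨hadj, rfl, rfl⟩]
      have hc : (0 : ℝ) < (Fintype.card V₁ : ℝ) := by
        exact_mod_cast lt_of_lt_of_le (by norm_num) hcard₁
      apply mul_pos (inv_pos.mpr hc)
      apply Finset.prod_pos
      intro i _
      apply inv_pos.mpr
      exact_mod_cast G₁.degree_pos_iff_exists_adj (w i.castSucc) |>.mpr ⟨_, hadj i⟩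
  have hne2 : walkDist G₂ ℓ₂ n a b ≠ 0 := by
    rw [← hdist]; exact ne_of_gt hpos
  have hex : ∃ w' : Fin (n + 1) → V₂,
      (∀ i : Fin n, G₂.Adj (w' i.castSucc) (w' i.succ)) ∧
      (fun i => ℓ₂ (w' i)) = a ∧ anonExp w' = b := by
    by_contra hno
    exact hne2 (Finset.sum_eq_zero fun w' _ => if_neg fun hc => hno ⟨w', hc⟩)
  obtain ⟨w', hadj', hlab', hanon'⟩ := hex
  have key : ∀ i j, w i = w j ↔ w' i = w' j := by
    intro i j
    rw [← anonExp_eq_iff w, ← anonExp_eq_iff w', hanon']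
  have hidx : ∀ v : V₁, w ((hcover v).choose) = v := fun v => (hcover v).choose_spec
  set f : V₁ → V₂ := fun v => w' ((hcover v).choose) with hf
  refine ⟨f, ?_, ?_, ?_⟩
  · intro u v huv
    have : w ((hcover u).choose) = w ((hcover v).choose) :=
      (key _ _).mpr huv
    rw [hidx u, hidx v] at this
    exact this
  · intro v
    have h1 : ℓ₂ (w' ((hcover v).choose)) = a ((hcover v).choose) :=
      congrFun hlab' _
    rw [hf]
    rw [h1, ha]
    simp only
    rw [hidx v]
  · intro u v h
    obtain ⟨i, h1, h2⟩ := hedge u v h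
    have hu : w' ((hcover u).choose) = w' i.castSucc :=
      (key _ _).mp (by rw [hidx u, h1])
    have hv : w' ((hcover v).choose) = w' i.succ :=
      (key _ _).mp (by rw [hidx v, h2])
    rw [hf]
    simp only
    rw [hu, hv]
    exact hadj' i

/-- **RUM can distinguish non-isomorphic graphs, conditional on the Reconstruction
Conjecture.**  Assume the Reconstruction Conjecture: any two finite simple graphs with at
least three vertices whose decks coincide (here: there is a bijection of vertex sets along
which the one-vertex-deleted subgraphs are pairwise isomorphic) are isomorphic.  If two
finite connected vertex-labeled simple graphs, each with at least two vertices, have the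
same length-`l` walk distribution for every `l`, then they are isomorphic as labeled
graphs. -/
theorem rum_distinguishes_nonisomorphic_graphs
    (reconstruction :
      ∀ (W₁ W₂ : Type) (_ : Fintype W₁) (_ : Fintype W₂)
        (H₁ : SimpleGraph W₁) (H₂ : SimpleGraph W₂),
        3 ≤ Fintype.card W₁ →
        (∃ e : W₁ ≃ W₂, ∀ v : W₁,
          Nonempty ((H₁.induce ({v}ᶜ : Set W₁)) ≃g (H₂.induce ({e v}ᶜ : Set W₂)))) →
        Nonempty (H₁ ≃g H₂))
    {V₁ V₂ L : Type} [Fintype V₁] [Fintype V₂] [DecidableEq V₁] [DecidableEq V₂]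
    [DecidableEq L]
    (G₁ : SimpleGraph V₁) (G₂ : SimpleGraph V₂)
    [DecidableRel G₁.Adj] [DecidableRel G₂.Adj]
    (ℓ₁ : V₁ → L) (ℓ₂ : V₂ → L)
    (hconn₁ : G₁.Connected) (hconn₂ : G₂.Connected)
    (hcard₁ : 2 ≤ Fintype.card V₁) (hcard₂ : 2 ≤ Fintype.card V₂)
    (hdist : ∀ (l : ℕ) (a : Fin (l + 1) → L) (b : Fin (l + 1) → ℕ),
      walkDist G₁ ℓ₁ l a b = walkDist G₂ ℓ₂ l a b) :
    ∃ φ : G₁ ≃g G₂, ∀ v : V₁, ℓ₂ (φ v) = ℓ₁ v := by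
  classical
  obtain ⟨f, hf, hfl, hfe⟩ :=
    exists_embedding G₁ G₂ ℓ₁ ℓ₂ hconn₁ hcard₁ hdist
  obtain ⟨g, hg, _, hge⟩ :=
    exists_embedding G₂ G₁ ℓ₂ ℓ₁ hconn₂ hcard₂ (fun l a b => (hdist l a b).symm)
  have hcard : Fintype.card V₁ = Fintype.card V₂ :=
    le_antisymm (Fintype.card_le_of_injective f hf) (Fintype.card_le_of_injective g hg)
  have hbij : Function.Bijective f :=
    (Fintype.bijective_iff_injective_and_card f).mpr ⟨hf, hcard⟩
  have hmapE : ∀ e ∈ G₁.edgeFinset, Sym2.map f e ∈ G₂.edgeFinset := by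
    intro e he
    induction e with
    | _ x y =>
      rw [Sym2.map_pair_eq, SimpleGraph.mem_edgeFinset, SimpleGraph.mem_edgeSet]
      rw [SimpleGraph.mem_edgeFinset, SimpleGraph.mem_edgeSet] at he
      exact hfe _ _ he
  have hmapE' : ∀ e ∈ G₂.edgeFinset, Sym2.map g e ∈ G₁.edgeFinset := by
    intro e he
    induction e with
    | _ x y =>
      rw [Sym2.map_pair_eq, SimpleGraph.mem_edgeFinset, SimpleGraph.mem_edgeSet]
      rw [SimpleGraph.mem_edgeFinset, SimpleGraph.mem_edgeSet] at he
      exact hge _ _ he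
  have hE : G₁.edgeFinset.card = G₂.edgeFinset.card :=
    le_antisymm
      (Finset.card_le_card_of_injOn _ hmapE ((Sym2.map.injective hf).injOn))
      (Finset.card_le_card_of_injOn _ hmapE' ((Sym2.map.injective hg).injOn))
  have himg : G₁.edgeFinset.image (Sym2.map f) = G₂.edgeFinset := by
    apply Finset.eq_of_subset_of_card_le
    · intro e he
      rw [Finset.mem_image] at he
      obtain ⟨e', he', rfl⟩ := he
      exact hmapE e' he'
    · rw [Finset.card_image_of_injective _ (Sym2.map.injective hf)]
      exact le_of_eq hE.symm
  have hrev : ∀ u v, G₂.Adj (f u) (f v) → G₁.Adj u v := by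
    intro u v h
    have : s(f u, f v) ∈ G₂.edgeFinset := by
      rw [SimpleGraph.mem_edgeFinset, SimpleGraph.mem_edgeSet]; exact h
    rw [← himg, Finset.mem_image] at this
    obtain ⟨e, he, hmap⟩ := this
    induction e with
    | _ x y =>
      rw [Sym2.map_pair_eq, Sym2.eq_iff] at hmap
      rw [SimpleGraph.mem_edgeFinset, SimpleGraph.mem_edgeSet] at he
      rcases hmap with ⟨h1, h2⟩ | ⟨h1, h2⟩
      · rwa [hf h1, hf h2] at he
      · rw [hf h1, hf h2] at he
        exact he.symm
  refine ⟨⟨Equiv.ofBijective f hbij, ?_⟩, ?_⟩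
  · intro u v
    exact ⟨hrev u v, hfe u v⟩
  · intro v
    exact hfl v
end
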